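/- Under the setup of a submanifold with potential of normals, the Weingarten coefficients d^k_{ij} are the coefficients of the Levi-Civita connection of the metric h_{ij}: they are symmetric in the lower indices, d^k_{ij} = d^k_{ji}, and they are compatible with h, i.e., ∂h_{ij}/∂u^k = Σ_s ( d^s_{ki} h_{sj} + d^s_{kj} h_{si} ) for all i,j,k; equivalently, d^k_{ij} = (1/2) Σ_l h^{kl} ( ∂h_{jl}/∂u^i + ∂h_{il}/∂u^j − ∂h_{ij}/∂u^l ), where (h^{kl}) is the inverse matrix of (h_{ij}). -/

import Mathlib

/-- Partial derivative in the `i`-th coordinate direction. -/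
noncomputable def pd {N : ℕ} {E : Type*} [NormedAddCommGroup E] [NormedSpace ℝ E]
    (i : Fin N) (f : (Fin N → ℝ) → E) (u : Fin N → ℝ) : E :=
  fderiv ℝ f u (Pi.single i 1)

/-- The pseudo-Euclidean scalar product `B(x,y) = xᵀ G y` on `ℝ^m`. -/
def Bform {m : ℕ} (G : Matrix (Fin m) (Fin m) ℝ) (x y : Fin m → ℝ) : ℝ :=
  ∑ i, ∑ j, x i * G i j * y j

section helpers
open Matrix
variable {N m : ℕ}

lemma pd_congr' {E : Type*} [NormedAddCommGroup E] [NormedSpace ℝ E]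
    {f g : (Fin N → ℝ) → E} {u : Fin N → ℝ} (hfg : f =ᶠ[nhds u] g) (i : Fin N) :
    pd i f u = pd i g u := by
  unfold pd; rw [hfg.fderiv_eq]

lemma diff_pd {f : (Fin N → ℝ) → (Fin m → ℝ)} {U : Set (Fin N → ℝ)} (hU : IsOpen U)
    (hf : ContDiffOn ℝ (⊤ : ℕ∞) f U) {u : Fin N → ℝ} (hu : u ∈ U) (i : Fin N) :
    DifferentiableAt ℝ (fun v => pd i f v) u := by
  have h1 : ContDiffAt ℝ (⊤ : ℕ∞) f u := hf.contDiffAt (hU.mem_nhds hu)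
  have h2 : ContDiffAt ℝ 1 (fderiv ℝ f) u := h1.fderiv_right (WithTop.coe_le_coe.mpr le_top)
  have h3 : DifferentiableAt ℝ (fderiv ℝ f) u := h2.differentiableAt one_ne_zero
  exact (ContinuousLinearMap.apply ℝ (Fin m → ℝ) (Pi.single i 1)).differentiableAt.comp u h3

lemma pd_comm {f : (Fin N → ℝ) → (Fin m → ℝ)} {U : Set (Fin N → ℝ)} (hU : IsOpen U)
    (hf : ContDiffOn ℝ (⊤ : ℕ∞) f U) {u : Fin N → ℝ} (hu : u ∈ U) (i j : Fin N) :
    pd i (pd j f) u = pd j (pd i f) u := by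
  have h1 : ContDiffAt ℝ (⊤ : ℕ∞) f u := hf.contDiffAt (hU.mem_nhds hu)
  have hsymm : IsSymmSndFDerivAt ℝ f u := h1.isSymmSndFDerivAt (by rw [minSmoothness_of_isRCLikeNormedField]; exact WithTop.coe_le_coe.mpr le_top)
  have h3 : DifferentiableAt ℝ (fderiv ℝ f) u :=
    (h1.fderiv_right (m := 1) (WithTop.coe_le_coe.mpr le_top)).differentiableAt one_ne_zero
  have key : ∀ a b : Fin N, pd a (pd b f) u =
      fderiv ℝ (fderiv ℝ f) u (Pi.single a 1) (Pi.single b 1) := by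
    intro a b
    show fderiv ℝ (fun v => (fderiv ℝ f v) (Pi.single b 1)) u (Pi.single a 1) = _
    rw [fderiv_clm_apply h3 (differentiableAt_const _)]
    simp
  rw [key i j, key j i, hsymm.eq]

lemma pd_apply {F : (Fin N → ℝ) → (Fin m → ℝ)} {u : Fin N → ℝ}
    (hF : DifferentiableAt ℝ F u) (k : Fin N) (a : Fin m) :
    pd k (fun v => F v a) u = pd k F u a := by
  unfold pd
  have h1 := (((ContinuousLinearMap.proj a : (Fin m → ℝ) →L[ℝ] ℝ)).hasFDerivAt.comp u
    hF.hasFDerivAt).fderiv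
  have h2 : (fun v => F v a) = (ContinuousLinearMap.proj a : (Fin m → ℝ) →L[ℝ] ℝ) ∘ F := rfl
  rw [h2, h1]
  rfl

lemma diffAt_apply {F : (Fin N → ℝ) → (Fin m → ℝ)} {u : Fin N → ℝ}
    (hF : DifferentiableAt ℝ F u) (a : Fin m) :
    DifferentiableAt ℝ (fun v => F v a) u :=
  ((ContinuousLinearMap.proj a : (Fin m → ℝ) →L[ℝ] ℝ)).differentiableAt.comp u hF

lemma pd_Bform (G : Matrix (Fin m) (Fin m) ℝ) {F Y : (Fin N → ℝ) → (Fin m → ℝ)} {u : Fin N → ℝ}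
    (hF : DifferentiableAt ℝ F u) (hY : DifferentiableAt ℝ Y u) (k : Fin N) :
    pd k (fun v => Bform G (F v) (Y v)) u
      = Bform G (pd k F u) (Y u) + Bform G (F u) (pd k Y u) := by
  unfold Bform pd
  have hdiff : ∀ a b : Fin m, DifferentiableAt ℝ (fun v => F v a * G a b * Y v b) u := by
    intro a b
    exact ((diffAt_apply hF a).mul_const (G a b)).mul (diffAt_apply hY b)
  rw [fderiv_fun_sum (fun a _ => DifferentiableAt.fun_sum (fun b _ => hdiff a b))]
  rw [ContinuousLinearMap.sum_apply]
  rw [← Finset.sum_add_distrib]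
  apply Finset.sum_congr rfl
  intro a _
  rw [fderiv_fun_sum (fun b _ => hdiff a b), ContinuousLinearMap.sum_apply,
    ← Finset.sum_add_distrib]
  apply Finset.sum_congr rfl
  intro b _
  rw [fderiv_fun_mul ((diffAt_apply hF a).mul_const (G a b)) (diffAt_apply hY b)]
  simp only [ContinuousLinearMap.add_apply, ContinuousLinearMap.smul_apply, smul_eq_mul]
  rw [fderiv_mul_const (diffAt_apply hF a)]
  simp only [ContinuousLinearMap.smul_apply, smul_eq_mul]
  have hA := pd_apply hF k a
  have hB := pd_apply hY k b
  unfold pd at hA hB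
  rw [hA, hB]
  ring

variable (G : Matrix (Fin m) (Fin m) ℝ)

lemma Bform_eq_dot (x y : Fin m → ℝ) : Bform G x y = x ⬝ᵥ G.mulVec y := by
  unfold Bform Matrix.mulVec
  simp only [dotProduct, Finset.mul_sum, mul_assoc]

lemma Bform_symm (hG : G.transpose = G) (x y : Fin m → ℝ) : Bform G x y = Bform G y x := by
  unfold Bform
  rw [Finset.sum_comm]
  apply Finset.sum_congr rfl; intro i _; apply Finset.sum_congr rfl; intro j _
  have : G j i = G i j := by conv_lhs => rw [← hG, Matrix.transpose_apply]
  rw [this]; ring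

/-- `Bform G · y` as a linear map. -/
noncomputable def BformL (y : Fin m → ℝ) : (Fin m → ℝ) →ₗ[ℝ] ℝ where
  toFun x := Bform G x y
  map_add' a b := by simp [Bform_eq_dot, add_dotProduct]
  map_smul' s a := by simp [Bform_eq_dot, smul_dotProduct]

/-- `Bform G x ·` as a linear map. -/
noncomputable def BformR (x : Fin m → ℝ) : (Fin m → ℝ) →ₗ[ℝ] ℝ where
  toFun y := Bform G x y
  map_add' a b := by simp [Bform_eq_dot, Matrix.mulVec_add, dotProduct_add]
  map_smul' s a := by simp [Bform_eq_dot, Matrix.mulVec_smul, dotProduct_smul]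

lemma Bform_sum_smul_left {ι : Type*} (s : Finset ι) (c : ι → ℝ) (f : ι → Fin m → ℝ)
    (y : Fin m → ℝ) :
    Bform G (∑ k ∈ s, c k • f k) y = ∑ k ∈ s, c k * Bform G (f k) y := by
  show BformL G y (∑ k ∈ s, c k • f k) = _
  rw [map_sum]
  exact Finset.sum_congr rfl fun k _ => by rw [(BformL G y).map_smul]; rfl

lemma Bform_sum_smul_right {ι : Type*} (s : Finset ι) (c : ι → ℝ) (f : ι → Fin m → ℝ)
    (x : Fin m → ℝ) :
    Bform G x (∑ k ∈ s, c k • f k) = ∑ k ∈ s, c k * Bform G x (f k) := by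
  show BformR G x (∑ k ∈ s, c k • f k) = _
  rw [map_sum]
  exact Finset.sum_congr rfl fun k _ => by rw [(BformR G x).map_smul]; rfl

lemma Bform_add_left (x x' y : Fin m → ℝ) :
    Bform G (x + x') y = Bform G x y + Bform G x' y := (BformL G y).map_add x x'

end helpers

/-- `X^k_{ij}` is written `X i j k`: the Weingarten decomposition
`∂²n/∂uⁱ∂uʲ = Σ_k c^k_{ij} ∂r/∂uᵏ + Σ_k d^k_{ij} ∂n/∂uᵏ`. -/
theorem stmt2
    (N : ℕ) (hN : 1 ≤ N)
    (G : Matrix (Fin (2 * N)) (Fin (2 * N)) ℝ)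
    (hGsymm : G.transpose = G) (hGdet : G.det ≠ 0)
    (U : Set (Fin N → ℝ)) (hU : IsOpen U)
    (r n : (Fin N → ℝ) → (Fin (2 * N) → ℝ))
    (hr : ContDiffOn ℝ (⊤ : ℕ∞) r U) (hn : ContDiffOn ℝ (⊤ : ℕ∞) n U)
    (hbasis : ∀ u ∈ U,
      LinearIndependent ℝ (Sum.elim (fun i : Fin N => pd i r u) (fun j : Fin N => pd j n u)) ∧
      Submodule.span ℝ
        (Set.range (Sum.elim (fun i : Fin N => pd i r u) (fun j : Fin N => pd j n u))) = ⊤)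
    (horth : ∀ u ∈ U, ∀ i j : Fin N, Bform G (pd i r u) (pd j n u) = 0)
    (h : (Fin N → ℝ) → Matrix (Fin N) (Fin N) ℝ)
    (hh : ∀ u ∈ U, ∀ i j : Fin N, h u i j = Bform G (pd i n u) (pd j n u))
    (c d : Fin N → Fin N → Fin N → (Fin N → ℝ) → ℝ)
    (hWeingarten : ∀ u ∈ U, ∀ i j : Fin N,
      pd i (pd j n) u =
        (∑ k, c i j k u • pd k r u) + ∑ k, d i j k u • pd k n u) :
    ∀ u ∈ U, ∀ i j k : Fin N,
      -- symmetry in the lower indices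
      d i j k u = d j i k u ∧
      -- compatibility with the metric h
      pd k (fun v => h v i j) u =
        ∑ s, (d k i s u * h u s j + d k j s u * h u s i) ∧
      -- the Levi-Civita (Christoffel) formula
      d i j k u = (1 / 2) * ∑ l,
        (h u)⁻¹ k l *
          (pd i (fun v => h v j l) u + pd j (fun v => h v i l) u
            - pd l (fun v => h v i j) u) := by
  intro u hu i j k
  have hli := (hbasis u hu).1
  have hsp := (hbasis u hu).2
  -- symmetry of h
  have hsymm : ∀ a b : Fin N, h u a b = h u b a := by
    intro a b
    rw [hh u hu a b, hh u hu b a, Bform_symm G hGsymm]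
  -- symmetry of d in the lower indices
  have dsymm : ∀ a b s : Fin N, d a b s u = d b a s u := by
    intro a b s
    have hcomm : pd a (pd b n) u = pd b (pd a n) u := pd_comm hU hn hu a b
    rw [hWeingarten u hu a b, hWeingarten u hu b a] at hcomm
    have hzero :
        ∑ t : Fin N ⊕ Fin N,
          (Sum.elim (fun s => c a b s u - c b a s u) (fun s => d a b s u - d b a s u)) t
            • (Sum.elim (fun i : Fin N => pd i r u) (fun j : Fin N => pd j n u)) t = 0 := by
      rw [Fintype.sum_sum_type]
      simp only [Sum.elim_inl, Sum.elim_inr, sub_smul, Finset.sum_sub_distrib]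
      rw [sub_add_sub_comm, sub_eq_zero]
      exact hcomm
    have := Fintype.linearIndependent_iff.mp hli _ hzero (Sum.inr s)
    simpa [sub_eq_zero] using this
  -- compatibility
  have compat : ∀ a b t : Fin N,
      pd t (fun v => h v a b) u =
        ∑ s, (d t a s u * h u s b + d t b s u * h u s a) := by
    intro a b t
    have hev : (fun v => h v a b) =ᶠ[nhds u] (fun v => Bform G (pd a n v) (pd b n v)) := by
      filter_upwards [hU.mem_nhds hu] with v hv
      exact hh v hv a b
    rw [pd_congr' hev]
    rw [pd_Bform G (diff_pd hU hn hu a) (diff_pd hU hn hu b) t]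
    have e1 : Bform G (pd t (pd a n) u) (pd b n u) = ∑ s, d t a s u * h u s b := by
      rw [hWeingarten u hu t a, Bform_add_left, Bform_sum_smul_left, Bform_sum_smul_left]
      have z1 : ∀ s : Fin N, c t a s u * Bform G (pd s r u) (pd b n u) = 0 := by
        intro s; rw [horth u hu s b]; ring
      have z2 : ∀ s : Fin N,
          d t a s u * Bform G (pd s n u) (pd b n u) = d t a s u * h u s b := by
        intro s; rw [← hh u hu s b]
      rw [Finset.sum_congr rfl (fun s _ => z1 s), Finset.sum_congr rfl (fun s _ => z2 s)]
      simp
    have e2 : Bform G (pd a n u) (pd t (pd b n) u) = ∑ s, d t b s u * h u s a := by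
      rw [Bform_symm G hGsymm, hWeingarten u hu t b, Bform_add_left,
        Bform_sum_smul_left, Bform_sum_smul_left]
      have z1 : ∀ s : Fin N, c t b s u * Bform G (pd s r u) (pd a n u) = 0 := by
        intro s; rw [horth u hu s a]; ring
      have z2 : ∀ s : Fin N,
          d t b s u * Bform G (pd s n u) (pd a n u) = d t b s u * h u s a := by
        intro s; rw [← hh u hu s a]
      rw [Finset.sum_congr rfl (fun s _ => z1 s), Finset.sum_congr rfl (fun s _ => z2 s)]
      simp
    rw [e1, e2, ← Finset.sum_add_distrib]
  -- nondegeneracy of h u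
  have hdet : (h u).det ≠ 0 := by
    intro hzero
    obtain ⟨x, hx0, hxv⟩ := Matrix.exists_mulVec_eq_zero_iff.mpr hzero
    set w : Fin (2 * N) → ℝ := ∑ s, x s • pd s n u with hw
    -- Bform of any basis vector with w is 0
    have hbv : ∀ t : Fin N ⊕ Fin N,
        Bform G ((Sum.elim (fun i : Fin N => pd i r u) (fun j : Fin N => pd j n u)) t) w = 0 := by
      intro t
      cases t with
      | inl a =>
        simp only [Sum.elim_inl]
        rw [hw, Bform_sum_smul_right]
        apply Finset.sum_eq_zero
        intro s _
        rw [horth u hu a s]; ring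
      | inr a =>
        simp only [Sum.elim_inr]
        rw [hw, Bform_sum_smul_right]
        have : ∀ s : Fin N, x s * Bform G (pd a n u) (pd s n u) = h u a s * x s := by
          intro s; rw [← hh u hu a s]; ring
        rw [Finset.sum_congr rfl (fun s _ => this s)]
        have := congrFun hxv a
        simpa [Matrix.mulVec, dotProduct] using this
    -- hence Bform G z w = 0 for all z
    have hall : ∀ z : Fin (2 * N) → ℝ, Bform G z w = 0 := by
      intro z
      have hz : z ∈ Submodule.span ℝ
          (Set.range (Sum.elim (fun i : Fin N => pd i r u) (fun j : Fin N => pd j n u))) := by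
        rw [hsp]; trivial
      have hle : Submodule.span ℝ
          (Set.range (Sum.elim (fun i : Fin N => pd i r u) (fun j : Fin N => pd j n u)))
          ≤ LinearMap.ker (BformL G w) := by
        rw [Submodule.span_le]
        rintro _ ⟨t, rfl⟩
        exact hbv t
      exact hle hz
    -- so G.mulVec w = 0, hence w = 0
    have hGw : G.mulVec w = 0 := by
      funext a
      have := hall (Pi.single a 1)
      rw [Bform_eq_dot] at this
      simpa [dotProduct, Pi.single_apply, Finset.sum_ite_eq] using this
    have hw0 : w = 0 := by
      by_contra hne
      exact hGdet (Matrix.exists_mulVec_eq_zero_iff.mp ⟨w, hne, hGw⟩)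
    -- linear independence of the pd s n u forces x = 0
    have hlin : LinearIndependent ℝ (fun j : Fin N => pd j n u) :=
      hli.comp Sum.inr Sum.inr_injective
    have : ∀ s, x s = 0 := by
      apply Fintype.linearIndependent_iff.mp hlin
      rw [← hw, hw0]
    exact hx0 (funext fun s => this s)
  -- Christoffel formula
  have hinv : (h u)⁻¹ * (h u) = 1 := Matrix.nonsing_inv_mul _ (isUnit_iff_ne_zero.mpr hdet)
  refine ⟨dsymm i j k, compat i j k, ?_⟩
  have key : ∀ l : Fin N,
      pd i (fun v => h v j l) u + pd j (fun v => h v i l) u - pd l (fun v => h v i j) u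
        = 2 * ∑ s, d i j s u * h u s l := by
    intro l
    rw [compat j l i, compat i l j, compat i j l]
    rw [← Finset.sum_add_distrib, ← Finset.sum_sub_distrib, Finset.mul_sum]
    apply Finset.sum_congr rfl
    intro s _
    rw [dsymm l i s, dsymm l j s, dsymm j i s]
    ring
  calc d i j k u
      = ∑ s, d i j s u * (1 : Matrix (Fin N) (Fin N) ℝ) k s := by
        simp [Matrix.one_apply, eq_comm (a := k), mul_comm]
    _ = ∑ s, d i j s u * ((h u)⁻¹ * h u) k s := by rw [hinv]
    _ = (1 / 2) * ∑ l, (h u)⁻¹ k l *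
          (pd i (fun v => h v j l) u + pd j (fun v => h v i l) u
            - pd l (fun v => h v i j) u) := by
        simp only [key, Matrix.mul_apply, Finset.mul_sum]
        rw [Finset.sum_comm]
        apply Finset.sum_congr rfl
        intro s _
        apply Finset.sum_congr rfl
        intro l _
        rw [hsymm s l]
        ring
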